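/- For every integer k ≥ 0 and every real A > 0 there exists a constant C = C(A,k) > 0 such that for all n ≥ 1 and every interval I ⊆ ℝ of length at most A/n, E[ sup_{y ∈ I} |X_n^{(k)}(y)| ] ≤ C · n^{k + 1/2}. -/

import Mathlib

open MeasureTheory ProbabilityTheory Filter Real

/-!
Write `X_n^{(m)}(y) = ∑ ε_j j^m cos(jy + mπ/2)`. For `y ∈ [a,b]` the fundamental theorem of
calculus gives `|X_n^{(k)}(y)| ≤ |X_n^{(k)}(a)| + ∫_a^b |X_n^{(k+1)}|`, so by Fubini the expected
supremum is at most `E|X_n^{(k)}(a)| + ∫_a^b E|X_n^{(k+1)}(t)| dt`. At a fixed point, `X_n^{(m)}` is a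
centred combination of independent standard Gaussians with variance `∑ j^{2m} cos² ≤ 2n^{2m+1}`,
so `E|X_n^{(m)}| ≤ √2 n^m √n` by Cauchy–Schwarz. Since `b - a ≤ A/n`, the extra factor `n` of the
second term is absorbed, and `C = √2 (1 + A)` works.
-/

/-- `(d/dy)^m cos(jy)`, from `cos' x = cos (x + π/2)`. -/
noncomputable def cosHarmonicDeriv (m j : ℕ) (y : ℝ) : ℝ :=
  (j : ℝ) ^ m * cos (j * y + m * (π / 2))

lemma hasDerivAt_cosHarmonicDeriv (m j : ℕ) (y : ℝ) :
    HasDerivAt (cosHarmonicDeriv m j) (cosHarmonicDeriv (m + 1) j y) y := by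
  have hinner : HasDerivAt (fun y : ℝ => j * y + m * (π / 2)) j y := by
    simpa using ((hasDerivAt_id y).const_mul (j : ℝ)).add_const ((m : ℝ) * (π / 2))
  refine (((hasDerivAt_cos _).comp y hinner).const_mul ((j : ℝ) ^ m)).congr_deriv ?_
  have hshift : (j : ℝ) * y + ((m + 1 : ℕ) : ℝ) * (π / 2) = j * y + m * (π / 2) + π / 2 := by
    push_cast; ring
  rw [cosHarmonicDeriv, hshift, cos_add_pi_div_two]
  ring

lemma continuous_cosHarmonicDeriv (m j : ℕ) : Continuous (cosHarmonicDeriv m j) := by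
  unfold cosHarmonicDeriv; fun_prop

lemma hasDerivAt_sum_mul_cosHarmonicDeriv (s : Finset ℕ) (c : ℕ → ℝ) (m : ℕ) (y : ℝ) :
    HasDerivAt (fun y => ∑ j ∈ s, c j * cosHarmonicDeriv m j y)
      (∑ j ∈ s, c j * cosHarmonicDeriv (m + 1) j y) y :=
  HasDerivAt.fun_sum fun j _ => (hasDerivAt_cosHarmonicDeriv m j y).const_mul (c j)

lemma iteratedDeriv_sum_mul_cos (s : Finset ℕ) (c : ℕ → ℝ) (m : ℕ) :
    iteratedDeriv m (fun x => ∑ j ∈ s, c j * cos (j * x))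
      = fun y => ∑ j ∈ s, c j * cosHarmonicDeriv m j y := by
  induction m with
  | zero => ext y; simp [cosHarmonicDeriv]
  | succ m ih =>
    ext y
    rw [iteratedDeriv_succ, ih]
    exact (hasDerivAt_sum_mul_cosHarmonicDeriv s c m y).deriv

lemma abs_cosHarmonicDeriv_le {m j n : ℕ} (hj : j ≤ n) (y : ℝ) :
    |cosHarmonicDeriv m j y| ≤ (n : ℝ) ^ m := by
  rw [cosHarmonicDeriv, abs_mul, abs_pow, Nat.abs_cast]
  calc (j : ℝ) ^ m * |cos (j * y + m * (π / 2))| ≤ (n : ℝ) ^ m * 1 := by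
        gcongr
        exact abs_cos_le_one _
    _ = (n : ℝ) ^ m := mul_one _

lemma sum_range_sq_cosHarmonicDeriv_le (n m : ℕ) (y : ℝ) :
    ∑ j ∈ Finset.range (n + 1), cosHarmonicDeriv m j y ^ 2 ≤ (n + 1) * ((n : ℝ) ^ m) ^ 2 := by
  calc ∑ j ∈ Finset.range (n + 1), cosHarmonicDeriv m j y ^ 2
      ≤ ∑ _j ∈ Finset.range (n + 1), ((n : ℝ) ^ m) ^ 2 := by
        refine Finset.sum_le_sum fun j hj => ?_
        rw [← sq_abs]
        gcongr
        exact abs_cosHarmonicDeriv_le (Finset.mem_range_succ_iff.mp hj) y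
    _ = (n + 1) * ((n : ℝ) ^ m) ^ 2 := by simp

lemma abs_le_abs_add_intervalIntegral_abs_deriv {f f' : ℝ → ℝ}
    (hf : ∀ t, HasDerivAt f (f' t) t) (hf' : Continuous f') {a b y : ℝ} (hy : y ∈ Set.Icc a b) :
    |f y| ≤ |f a| + ∫ t in a..b, |f' t| := by
  have hftc : ∫ t in a..y, f' t = f y - f a :=
    intervalIntegral.integral_eq_sub_of_hasDerivAt (fun t _ => hf t) (hf'.intervalIntegrable a y)
  have hsplit : (∫ t in a..y, |f' t|) + ∫ t in y..b, |f' t| = ∫ t in a..b, |f' t| :=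
    intervalIntegral.integral_add_adjacent_intervals
      (hf'.abs.intervalIntegrable a y) (hf'.abs.intervalIntegrable y b)
  have htail : 0 ≤ ∫ t in y..b, |f' t| :=
    intervalIntegral.integral_nonneg hy.2 fun t _ => abs_nonneg _
  calc |f y| ≤ |f a| + |f y - f a| := by
        simpa using abs_add_le (f a) (f y - f a)
    _ ≤ |f a| + ∫ t in a..y, |f' t| := by
        rw [← hftc]
        gcongr
        exact intervalIntegral.abs_integral_le_integral_abs hy.1
    _ ≤ |f a| + ∫ t in a..b, |f' t| := by linarith

section Probability

variable {Ω : Type*} [MeasurableSpace Ω] {μ : Measure Ω} [IsProbabilityMeasure μ]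

lemma integral_abs_le_sqrt_integral_sq {Y : Ω → ℝ} (hY : MemLp Y 2 μ) :
    ∫ ω, |Y ω| ∂μ ≤ √(∫ ω, Y ω ^ 2 ∂μ) := by
  have hvar := variance_eq_sub hY.abs
  simp only [Pi.pow_apply, Pi.abs_apply, sq_abs] at hvar
  exact le_sqrt_of_sq_le (by linarith [variance_nonneg |Y| μ])

lemma integral_abs_sum_mul_le_of_gaussianReal {ι : Type*} {ε : ι → Ω → ℝ}
    (hlaw : ∀ i, HasLaw (ε i) (gaussianReal 0 1) μ)
    (hindep : Pairwise fun i j => IndepFun (ε i) (ε j) μ) (s : Finset ι) (d : ι → ℝ) :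
    ∫ ω, |∑ i ∈ s, ε i ω * d i| ∂μ ≤ √(∑ i ∈ s, d i ^ 2) := by
  set X : ι → Ω → ℝ := fun i ω => ε i ω * d i
  have hL2 : ∀ i, MemLp (X i) 2 μ := fun i => (hlaw i).hasGaussianLaw.memLp_two.mul_const _
  have hY : MemLp (fun ω => ∑ i ∈ s, X i ω) 2 μ := memLp_finsetSum s fun i _ => hL2 i
  have hmean : ∫ ω, ∑ i ∈ s, X i ω ∂μ = 0 := by
    rw [integral_finsetSum s fun i _ => (hL2 i).integrable one_le_two]
    refine Finset.sum_eq_zero fun i _ => ?_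
    simp [X, integral_mul_const, (hlaw i).integral_eq, integral_id_gaussianReal]
  have hvar : Var[fun ω => ∑ i ∈ s, X i ω; μ] = ∑ i ∈ s, d i ^ 2 := by
    have hfun : (fun ω => ∑ i ∈ s, X i ω) = ∑ i ∈ s, X i := by ext ω; simp
    rw [hfun, IndepFun.variance_sum (fun i _ => hL2 i)
      fun i _ j _ hij => (hindep hij).comp (measurable_mul_const _) (measurable_mul_const _)]
    refine Finset.sum_congr rfl fun i _ => ?_
    simp [X, variance_mul_const, (hlaw i).variance_eq, variance_id_gaussianReal]
  calc ∫ ω, |∑ i ∈ s, X i ω| ∂μ ≤ √(∫ ω, (∑ i ∈ s, X i ω) ^ 2 ∂μ) :=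
        integral_abs_le_sqrt_integral_sq hY
    _ = √(∑ i ∈ s, d i ^ 2) := by
        rw [← variance_of_integral_eq_zero hY.aemeasurable hmean, hvar]

end Probability

lemma integral_iSup_abs_le_of_hasDerivAt {Ω : Type*} [MeasurableSpace Ω] {μ : Measure Ω} [SFinite μ]
    {F F' : Ω → ℝ → ℝ} {a b : ℝ} (hab : a ≤ b)
    (hF : ∀ ω t, HasDerivAt (F ω) (F' ω t) t) (hF' : ∀ ω, Continuous (F' ω))
    (hFa : Integrable (fun ω => F ω a) μ)
    (hF'int : Integrable (Function.uncurry F') (μ.prod (volume.restrict (Set.Ioc a b)))) :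
    ∫ ω, ⨆ y ∈ Set.Icc a b, |F ω y| ∂μ ≤ ∫ ω, |F ω a| ∂μ + ∫ t in a..b, ∫ ω, |F' ω t| ∂μ := by
  have hsup : ∀ ω, ⨆ y ∈ Set.Icc a b, |F ω y| ≤ |F ω a| + ∫ t in Set.Ioc a b, |F' ω t| := by
    intro ω
    have hbound0 : 0 ≤ |F ω a| + ∫ t in Set.Ioc a b, |F' ω t| :=
      add_nonneg (abs_nonneg _) (setIntegral_nonneg measurableSet_Ioc fun t _ => abs_nonneg _)
    rw [← intervalIntegral.integral_of_le hab] at hbound0 ⊢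
    exact Real.iSup_le (fun y => Real.iSup_le
      (fun hy => abs_le_abs_add_intervalIntegral_abs_deriv (hF ω) (hF' ω) hy) hbound0) hbound0
  have hpath : Integrable (fun ω => ∫ t in Set.Ioc a b, |F' ω t|) μ :=
    hF'int.abs.integral_prod_left
  calc ∫ ω, ⨆ y ∈ Set.Icc a b, |F ω y| ∂μ
      ≤ ∫ ω, (|F ω a| + ∫ t in Set.Ioc a b, |F' ω t|) ∂μ :=
        integral_mono_of_nonneg (.of_forall fun ω => Real.iSup_nonneg fun y =>
          Real.iSup_nonneg fun _ => abs_nonneg _) (hFa.abs.add hpath) (.of_forall hsup)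
    _ = _ := by
        rw [integral_add hFa.abs hpath, intervalIntegral.integral_of_le hab,
          integral_integral_swap hF'int.abs]

lemma integrable_uncurry_sum_mul {α β ι : Type*} [MeasurableSpace α] [MeasurableSpace β]
    {μ : Measure α} {ν : Measure β} [SFinite ν] (s : Finset ι) {f : ι → α → ℝ} {g : ι → β → ℝ}
    (hf : ∀ i ∈ s, Integrable (f i) μ) (hg : ∀ i ∈ s, Integrable (g i) ν) :
    Integrable (Function.uncurry fun x y => ∑ i ∈ s, f i x * g i y) (μ.prod ν) :=
  integrable_finsetSum s fun i hi => (hf i hi).mul_prod (hg i hi)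

lemma integral_abs_sum_range_mul_cosHarmonicDeriv_le {Ω : Type*} [MeasurableSpace Ω]
    {μ : Measure Ω} [IsProbabilityMeasure μ] {ε : ℕ → Ω → ℝ}
    (hlaw : ∀ j, HasLaw (ε j) (gaussianReal 0 1) μ)
    (hindep : Pairwise fun i j => IndepFun (ε i) (ε j) μ) {n : ℕ} (hn : 1 ≤ n) (m : ℕ) (y : ℝ) :
    ∫ ω, |∑ j ∈ Finset.range (n + 1), ε j ω * cosHarmonicDeriv m j y| ∂μ
      ≤ √2 * (n : ℝ) ^ m * √n := by
  refine (integral_abs_sum_mul_le_of_gaussianReal hlaw hindep _ _).trans ?_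
  rw [sqrt_le_iff]
  refine ⟨by positivity, (sum_range_sq_cosHarmonicDeriv_le n m y).trans ?_⟩
  have hn' : (1 : ℝ) ≤ n := by exact_mod_cast hn
  rw [mul_pow, mul_pow, sq_sqrt zero_le_two, sq_sqrt (by positivity)]
  nlinarith [pow_nonneg (pow_nonneg (Nat.cast_nonneg n : (0 : ℝ) ≤ n) m) 2]

theorem statement10
    {Ω : Type*} [MeasurableSpace Ω] (μ : Measure Ω) [IsProbabilityMeasure μ]
    (ε : ℕ → Ω → ℝ)
    (hmeas : ∀ k, Measurable (ε k))
    (hindep : iIndepFun ε μ)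
    (hgauss : ∀ k, Measure.map (ε k) μ = gaussianReal 0 1)
    (k : ℕ) (A : ℝ) (hA : 0 < A) :
    ∃ C : ℝ, 0 < C ∧ ∀ n : ℕ, 1 ≤ n → ∀ a b : ℝ, a ≤ b → b - a ≤ A / n →
      (∫ ω, (⨆ y ∈ Set.Icc a b,
          |iteratedDeriv k
            (fun x => ∑ j ∈ Finset.range (n + 1), ε j ω * Real.cos (j * x)) y|) ∂μ)
        ≤ C * (n : ℝ) ^ k * Real.sqrt n := by
  have hlaw : ∀ j, HasLaw (ε j) (gaussianReal 0 1) μ := fun j => ⟨(hmeas j).aemeasurable, hgauss j⟩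
  have hpair : Pairwise fun i j => IndepFun (ε i) (ε j) μ := fun i j hij => hindep.indepFun hij
  have hint : ∀ j, Integrable (ε j) μ := fun j => (hlaw j).hasGaussianLaw.integrable
  refine ⟨√2 * (1 + A), by positivity, fun n hn a b hab hlen => ?_⟩
  have hlen' : (b - a) * n ≤ A := (le_div_iff₀ (by exact_mod_cast hn)).mp hlen
  simp_rw [iteratedDeriv_sum_mul_cos]
  calc _ ≤ ∫ ω, |∑ j ∈ Finset.range (n + 1), ε j ω * cosHarmonicDeriv k j a| ∂μ
        + ∫ t in a..b, ∫ ω, |∑ j ∈ Finset.range (n + 1), ε j ω * cosHarmonicDeriv (k + 1) j t| ∂μ :=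
        integral_iSup_abs_le_of_hasDerivAt hab
          (fun ω t => hasDerivAt_sum_mul_cosHarmonicDeriv _ (fun j => ε j ω) k t)
          (fun ω => continuous_finsetSum _ fun j _ =>
            continuous_const.mul (continuous_cosHarmonicDeriv _ j))
          (integrable_finsetSum _ fun j _ => (hint j).mul_const _)
          (integrable_uncurry_sum_mul _ (fun j _ => hint j)
            fun j _ => (continuous_cosHarmonicDeriv _ j).integrableOn_Ioc)
    _ ≤ √2 * (n : ℝ) ^ k * √n + √2 * (n : ℝ) ^ (k + 1) * √n * |b - a| := by
        gcongr
        · exact integral_abs_sum_range_mul_cosHarmonicDeriv_le hlaw hpair hn k a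
        · refine (Real.le_norm_self _).trans (intervalIntegral.norm_integral_le_of_norm_le_const ?_)
          intro t _
          rw [norm_of_nonneg (integral_nonneg fun _ => abs_nonneg _)]
          exact integral_abs_sum_range_mul_cosHarmonicDeriv_le hlaw hpair hn (k + 1) t
    _ = √2 * (n : ℝ) ^ k * √n * (1 + (b - a) * n) := by
        rw [abs_of_nonneg (sub_nonneg.mpr hab)]; ring
    _ ≤ √2 * (n : ℝ) ^ k * √n * (1 + A) := by gcongr
    _ = √2 * (1 + A) * (n : ℝ) ^ k * √n := by ring
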